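/- Fix r ≥ 1 and functions G, F : ℤ_{≥r} → (0,∞) with conventions G(r−1) = F(r−1) = 1. Then the matrix identity H_r(G)·H_r(F) = H_{r+1}(F⊗G)·H_r(G⊙F) holds entrywise: for all i,j ∈ ℤ_{≥1}, Σ_k H_r(G)(i,k)·H_r(F)(k,j) = Σ_k H_{r+1}(F⊗G)(i,k)·H_r(G⊙F)(k,j) (both sums have finitely many non-zero terms). -/

import Mathlib

open scoped BigOperators

/-- Value of `f : ℤ_{≥ r} → ℝ`, with the convention that values below the domain base
`r` equal `1`. -/
noncomputable def clo (r : ℤ) (f : ℤ → ℝ) (y : ℤ) : ℝ := if y < r then 1 else f y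

/-- The sum `Σ_{m=r}^{x} g(m)/f(m−1)` with the convention `f(r−1) = 1`. -/
noncomputable def pitSum (r : ℤ) (f g : ℤ → ℝ) (x : ℤ) : ℝ :=
  ∑ m ∈ Finset.Icc r x, g m / clo r f (m - 1)

/-- `(g ⊙ f)(x) = f(x) · Σ_{m=r}^{x} g(m)/f(m−1)`, for `f, g : ℤ_{≥r} → (0,∞)`. -/
noncomputable def odot (r : ℤ) (g f : ℤ → ℝ) : ℤ → ℝ := fun x => f x * pitSum r f g x

/-- `(f ⊗ g)(x) = g(x) · (Σ_{m=r}^{x} g(m)/f(m−1))⁻¹`, for `f, g : ℤ_{≥r} → (0,∞)`. -/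
noncomputable def otimes (r : ℤ) (f g : ℤ → ℝ) : ℤ → ℝ := fun x => g x * (pitSum r f g x)⁻¹

/-- The matrix `H_r(E)`: `H_r(E)(i,j) = 1` if `i = j < r`; `e_i e_{i+1} ⋯ e_j` if
`r ≤ i ≤ j` where `e_x = E(x)/E(x−1)` (convention `E(r−1) = 1`); and `0` otherwise. -/
noncomputable def Hmat (r : ℤ) (E : ℤ → ℝ) : ℤ → ℤ → ℝ :=
  fun i j =>
    if i = j ∧ j < r then 1
    else if r ≤ i ∧ i ≤ j then ∏ x ∈ Finset.Icc i j, E x / clo r E (x - 1)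
    else 0

/-!
For `r ≤ i ≤ j` the product defining `H_r(E)(i,j)` telescopes to `E(j)/E(i-1)`, so every entry
of both products is a sum over `i ≤ k ≤ j` of explicit ratios. Writing
`P(x) = Σ_{m=r}^{x} G(m)/F(m-1)`, the left side is `F(j)/G(i-1) · (P(j) - P(i-1))` because
`G(k)/F(k-1) = P(k) - P(k-1)`. On the right,
`(F⊗G)(k)/(G⊙F)(k-1) = G(k)/(P(k) F(k-1) P(k-1)) = 1/P(k-1) - 1/P(k)` telescopes to the same
value. Rows `i < r` are unit rows on both sides, and so is the row `i = r` of `H_{r+1}(F⊗G)`.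
-/
open Finset

section Telescoping

variable {a b : ℤ}

theorem sum_Icc_sub_pred {M : Type*} [AddCommGroup M] (f : ℤ → M) (hab : a ≤ b + 1) :
    ∑ k ∈ Icc a b, (f k - f (k - 1)) = f b - f (a - 1) := by
  obtain ⟨n, rfl⟩ : ∃ n : ℕ, b = a - 1 + n := ⟨(b - (a - 1)).toNat, by omega⟩
  induction n with
  | zero => simp
  | succ n ih =>
    rw [Nat.cast_succ, ← add_assoc, ← insert_Icc_right_eq_Icc_add_one (by omega),
      sum_insert (by simp), ih (by omega), add_sub_cancel_right]
    abel

theorem prod_Icc_div_pred {K : Type*} [CommGroupWithZero K] (f : ℤ → K) (hf : ∀ k, f k ≠ 0)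
    (hab : a ≤ b + 1) : ∏ k ∈ Icc a b, f k / f (k - 1) = f b / f (a - 1) := by
  obtain ⟨n, rfl⟩ : ∃ n : ℕ, b = a - 1 + n := ⟨(b - (a - 1)).toNat, by omega⟩
  induction n with
  | zero => simp [div_self (hf _)]
  | succ n ih =>
    rw [Nat.cast_succ, ← add_assoc, ← insert_Icc_right_eq_Icc_add_one (by omega),
      prod_insert (by simp), ih (by omega), add_sub_cancel_right, div_mul_div_cancel₀ (hf _)]

end Telescoping

section Clo

variable {r y : ℤ} {f : ℤ → ℝ}

theorem clo_of_lt (h : y < r) : clo r f y = 1 := if_pos h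

theorem clo_of_le (h : r ≤ y) : clo r f y = f y := if_neg (not_lt.2 h)

theorem clo_ne_zero (hf : ∀ x, r ≤ x → f x ≠ 0) (y : ℤ) : clo r f y ≠ 0 := by
  rcases lt_or_ge y r with h | h
  · rw [clo_of_lt h]; exact one_ne_zero
  · rw [clo_of_le h]; exact hf y h

end Clo

section Hmat

variable {r s i j : ℤ} {E : ℤ → ℝ}

theorem Hmat_eq_zero_of_lt (h : j < i) : Hmat r E i j = 0 := by
  unfold Hmat
  rw [if_neg (by omega), if_neg (by omega)]

theorem Hmat_of_lt (hi : i < r) : Hmat r E i j = if i = j then 1 else 0 := by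
  unfold Hmat
  by_cases hij : i = j
  · rw [if_pos ⟨hij, hij ▸ hi⟩, if_pos hij]
  · rw [if_neg (by tauto), if_neg (by omega), if_neg hij]

theorem Hmat_eq_div (hE : ∀ x, r ≤ x → E x ≠ 0) (hi : r ≤ i) (hij : i ≤ j) :
    Hmat r E i j = E j / clo r E (i - 1) := by
  unfold Hmat
  rw [if_neg (by omega), if_pos ⟨hi, hij⟩, ← clo_of_le (f := E) (hi.trans hij),
    ← prod_Icc_div_pred _ (clo_ne_zero hE) (by omega)]
  refine prod_congr rfl fun x hx => ?_
  rw [clo_of_le (f := E) (hi.trans (mem_Icc.1 hx).1)]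

theorem tsum_Hmat_mul_of_lt (hi : i < r) (v : ℤ → ℝ) : ∑' k, Hmat r E i k * v k = v i := by
  rw [tsum_eq_single i fun k hk => by rw [Hmat_of_lt hi, if_neg (Ne.symm hk), zero_mul],
    Hmat_of_lt hi, if_pos rfl, one_mul]

theorem tsum_Hmat_mul_Hmat (A B : ℤ → ℝ) :
    ∑' k, Hmat r A i k * Hmat s B k j = ∑ k ∈ Icc i j, Hmat r A i k * Hmat s B k j := by
  refine tsum_eq_sum fun k hk => ?_
  rcases lt_or_ge k i with h | h
  · rw [Hmat_eq_zero_of_lt h, zero_mul]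
  · rw [Hmat_eq_zero_of_lt (j := j) (by simp_all), mul_zero]

end Hmat

section Pitman

variable {r x : ℤ} {f g : ℤ → ℝ}

theorem pitSum_of_lt (h : x < r) : pitSum r f g x = 0 := by
  rw [pitSum, Icc_eq_empty (by omega), sum_empty]

theorem pitSum_self : pitSum r f g r = g r := by
  rw [pitSum, Icc_self, sum_singleton, clo_of_lt (by omega), div_one]

theorem pitSum_sub_pitSum_pred (hx : r ≤ x) :
    pitSum r f g x - pitSum r f g (x - 1) = g x / clo r f (x - 1) := by
  rw [pitSum, pitSum, ← insert_Icc_sub_one_right_eq_Icc hx, sum_insert (by simp),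
    add_sub_cancel_right]

theorem pitSum_pos (hf : ∀ x, r ≤ x → 0 < f x) (hg : ∀ x, r ≤ x → 0 < g x) (hx : r ≤ x) :
    0 < pitSum r f g x := by
  refine sum_pos (fun m hm => div_pos (hg m (mem_Icc.1 hm).1) ?_) (nonempty_Icc.2 hx)
  rcases lt_or_ge (m - 1) r with h | h
  · rw [clo_of_lt h]; exact one_pos
  · rw [clo_of_le h]; exact hf _ h

theorem odot_pos (hf : ∀ x, r ≤ x → 0 < f x) (hg : ∀ x, r ≤ x → 0 < g x) (hx : r ≤ x) :
    0 < odot r g f x :=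
  mul_pos (hf x hx) (pitSum_pos hf hg hx)

theorem otimes_pos (hf : ∀ x, r ≤ x → 0 < f x) (hg : ∀ x, r ≤ x → 0 < g x) (hx : r ≤ x) :
    0 < otimes r f g x :=
  mul_pos (hg x hx) (inv_pos.2 (pitSum_pos hf hg hx))

theorem clo_otimes (hg : g r ≠ 0) (hx : r ≤ x) :
    clo (r + 1) (otimes r f g) x = g x / pitSum r f g x := by
  rcases hx.eq_or_lt with rfl | h
  · rw [clo_of_lt (by omega), pitSum_self, div_self hg]
  · rw [clo_of_le (by omega), otimes, div_eq_mul_inv]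

theorem otimes_div_odot_pred (hf : ∀ x, r ≤ x → 0 < f x) (hg : ∀ x, r ≤ x → 0 < g x)
    (hx : r < x) :
    otimes r f g x / odot r g f (x - 1) = (pitSum r f g (x - 1))⁻¹ - (pitSum r f g x)⁻¹ := by
  have hP := (pitSum_pos hf hg hx.le).ne'
  have hP' := (pitSum_pos hf hg (x := x - 1) (by omega)).ne'
  have hf' := (hf (x - 1) (by omega)).ne'
  have hgx : g x = (pitSum r f g x - pitSum r f g (x - 1)) * f (x - 1) := by
    rw [pitSum_sub_pitSum_pred hx.le, clo_of_le (by omega), div_mul_cancel₀ _ hf']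
  rw [otimes, odot, hgx]
  field_simp

end Pitman

section Product

variable {r i j : ℤ} {F G : ℤ → ℝ}

theorem sum_Hmat_mul_Hmat (hF : ∀ x, r ≤ x → F x ≠ 0) (hG : ∀ x, r ≤ x → G x ≠ 0)
    (hi : r ≤ i) (hij : i ≤ j) :
    ∑ k ∈ Icc i j, Hmat r G i k * Hmat r F k j
      = F j / clo r G (i - 1) * (pitSum r F G j - pitSum r F G (i - 1)) := by
  rw [← sum_Icc_sub_pred _ (by omega), mul_sum]
  refine sum_congr rfl fun k hk => ?_
  have hk := mem_Icc.1 hk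
  rw [Hmat_eq_div hG hi hk.1, Hmat_eq_div hF (hi.trans hk.1) hk.2,
    pitSum_sub_pitSum_pred (hi.trans hk.1)]
  ring

theorem sum_Hmat_otimes_mul_Hmat_odot (hF : ∀ x, r ≤ x → 0 < F x)
    (hG : ∀ x, r ≤ x → 0 < G x) (hi : r < i) (hij : i ≤ j) :
    ∑ k ∈ Icc i j, Hmat (r + 1) (otimes r F G) i k * Hmat r (odot r G F) k j
      = F j / G (i - 1) * (pitSum r F G j - pitSum r F G (i - 1)) := by
  have hT : ∀ x, r + 1 ≤ x → otimes r F G x ≠ 0 := fun x hx =>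
    (otimes_pos hF hG (by omega)).ne'
  have hS : ∀ x, r ≤ x → odot r G F x ≠ 0 := fun x hx => (odot_pos hF hG hx).ne'
  have hsum : ∑ k ∈ Icc i j, otimes r F G k / odot r G F (k - 1)
      = (pitSum r F G (i - 1))⁻¹ - (pitSum r F G j)⁻¹ := by
    have htel := sum_Icc_sub_pred (fun x => -(pitSum r F G x)⁻¹) (show i ≤ j + 1 by omega)
    simp only [neg_sub_neg] at htel
    rw [← htel]
    refine sum_congr rfl fun k hk => ?_
    exact otimes_div_odot_pred hF hG (by have := (mem_Icc.1 hk).1; omega)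
  calc ∑ k ∈ Icc i j, Hmat (r + 1) (otimes r F G) i k * Hmat r (odot r G F) k j
      = odot r G F j / clo (r + 1) (otimes r F G) (i - 1)
          * ∑ k ∈ Icc i j, otimes r F G k / odot r G F (k - 1) := by
        rw [mul_sum]
        refine sum_congr rfl fun k hk => ?_
        have hk := mem_Icc.1 hk
        rw [Hmat_eq_div hT hi hk.1, Hmat_eq_div hS (by omega) hk.2,
          clo_of_le (f := odot r G F) (by omega : r ≤ k - 1)]
        ring
    _ = F j / G (i - 1) * (pitSum r F G j - pitSum r F G (i - 1)) := by
        have := pitSum_pos hF hG (x := j) (by omega)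
        have := pitSum_pos hF hG (x := i - 1) (by omega)
        have := hG (i - 1) (by omega)
        rw [hsum, clo_otimes (hG r le_rfl).ne' (by omega), odot]
        field_simp

end Product

theorem H_matrix_identity_general (r : ℤ) (G F : ℤ → ℝ)
    (hG : ∀ x : ℤ, r ≤ x → 0 < G x) (hF : ∀ x : ℤ, r ≤ x → 0 < F x) :
    ∀ i j : ℤ, 1 ≤ i → 1 ≤ j →
      (∑' k : ℤ, Hmat r G i k * Hmat r F k j)
        = ∑' k : ℤ, Hmat (r + 1) (otimes r F G) i k * Hmat r (odot r G F) k j := by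
  intro i j _ _
  rcases lt_or_ge i r with hi | hi
  · rw [tsum_Hmat_mul_of_lt hi, tsum_Hmat_mul_of_lt (by omega), Hmat_of_lt hi, Hmat_of_lt hi]
  rcases lt_or_ge j i with hji | hij
  · simp only [tsum_Hmat_mul_Hmat, Icc_eq_empty_of_lt hji, sum_empty]
  rw [tsum_Hmat_mul_Hmat, sum_Hmat_mul_Hmat (fun x hx => (hF x hx).ne')
    (fun x hx => (hG x hx).ne') hi hij]
  rcases hi.eq_or_lt with rfl | hri
  · rw [tsum_Hmat_mul_of_lt (lt_add_one _),
      Hmat_eq_div (fun x hx => (odot_pos hF hG hx).ne') le_rfl hij,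
      clo_of_lt (sub_one_lt _), clo_of_lt (sub_one_lt _), pitSum_of_lt (sub_one_lt _), odot]
    ring
  · rw [tsum_Hmat_mul_Hmat, sum_Hmat_otimes_mul_Hmat_odot hF hG hri hij, clo_of_le (by omega)]

/-- **The local matrix identity (2.24) of Noumi–Yamada:**
`H_r(G)·H_r(F) = H_{r+1}(F⊗G)·H_r(G⊙F)`, entrywise. -/
theorem H_matrix_identity (r : ℤ) (hr : 1 ≤ r) (G F : ℤ → ℝ)
    (hG : ∀ x : ℤ, r ≤ x → 0 < G x) (hF : ∀ x : ℤ, r ≤ x → 0 < F x) :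
    ∀ i j : ℤ, 1 ≤ i → 1 ≤ j →
      (∑' k : ℤ, Hmat r G i k * Hmat r F k j)
        = ∑' k : ℤ, Hmat (r + 1) (otimes r F G) i k * Hmat r (odot r G F) k j :=
  H_matrix_identity_general r G F hG hF
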